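/- Let TS be a semantic labeled transition system with total transition relation, fix a k-safety specification φ̂ given by ψ, (ξ i), φ, and let 𝒜 be a valid arbiter for TS and φ̂. Then TS ⊨ φ̂ if and only if every composed state s̄ that is ψ-reachable in the composed transition system TS^k_𝒜 satisfies ¬ Bad(s̄). -/

import Mathlib

/-!
Call a tuple of positions in a family of traces aligned when every trace has passed the same
number of observation points before its position. A valid arbiter only lets non-observing
components move, or moves all components together when all of them observe, so every composed
run keeps its components aligned: a reachable bad state therefore yields traces whose `c`-th
observation states form that bad state. Conversely, given traces with `j + 1` observation
points each, the arbiter can always advance an aligned tuple lying below the tuple of `j`-th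
observation points without overtaking it, so that tuple is reachable and hence not bad.
-/

/-- A semantic labeled transition system with a total transition relation. -/
structure LTS (S L : Type*) where
  Init : Set S
  Tr : S → L → S → Prop
  total : ∀ s, ∃ ℓ s', Tr s ℓ s'

/-- `t` is a trace of `T` starting from `s`. -/
def LTS.IsTrace {S L : Type*} (T : LTS S L) (t : ℕ → S) (s : S) : Prop :=
  t 0 = s ∧ ∀ n, ∃ ℓ, T.Tr (t n) ℓ (t (n + 1))

/-- The trace `t` has at least `j + 1` observation points with respect to `ξ`. -/
def HasObsUpTo {S : Type*} (ξ : S → Prop) (t : ℕ → S) (j : ℕ) : Prop :=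
  ∃ f : Fin (j + 1) → ℕ, StrictMono f ∧ ∀ i, ξ (t (f i))

/-- The `j`-th observation state of the trace `t` with respect to `ξ`:
`t n_j` where `n_j` is the `j`-th smallest element of `{n | ξ (t n)}`. -/
noncomputable def obsState {S : Type*} (ξ : S → Prop) (t : ℕ → S) (j : ℕ) : S :=
  t (Nat.nth (fun n => ξ (t n)) j)

/-- `TS ⊨ φ̂` for the `k`-safety specification given by `ψ`, `ξ`, `φ`. -/
def kSafetyModels {S L : Type*} (T : LTS S L) {k : ℕ} (ψ : (Fin k → S) → Prop)
    (ξ : Fin k → S → Prop) (φ : (Fin k → S) → Prop) : Prop :=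
  ∀ sb : Fin k → S, (∀ i, sb i ∈ T.Init) → ψ sb →
    ∀ t : Fin k → ℕ → S, (∀ i, T.IsTrace (t i) (sb i)) →
      ∀ j : ℕ, (∀ i, HasObsUpTo (ξ i) (t i) j) →
        φ (fun i => obsState (ξ i) (t i) j)

/-- `s̄ ↝[M,ℓ̄] s̄'`: the composed step with schedule `M` and labels `ℓ̄`. -/
def ComposedStep {S L : Type*} (T : LTS S L) {k : ℕ} (M : Set (Fin k)) (ℓ : Fin k → L)
    (sb sb' : Fin k → S) : Prop :=
  (∀ i ∈ M, T.Tr (sb i) (ℓ i) (sb' i)) ∧ ∀ i ∉ M, sb' i = sb i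

/-- `M` is a valid schedule for the composed state `s̄`. -/
def ValidSched {S : Type*} {k : ℕ} (ξ : Fin k → S → Prop) (M : Set (Fin k))
    (sb : Fin k → S) : Prop :=
  (∀ i ∈ M, ¬ ξ i (sb i)) ∨ (M = Set.univ ∧ ∀ i, ξ i (sb i))

/-- `Bad s̄`: all traces are at observation points but `φ` fails. -/
def BadState {S : Type*} {k : ℕ} (ξ : Fin k → S → Prop) (φ : (Fin k → S) → Prop)
    (sb : Fin k → S) : Prop :=
  (∀ i, ξ i (sb i)) ∧ ¬ φ sb

/-- A schedule: a nonempty subset of `Fin k`. -/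
def Sched (k : ℕ) := {M : Set (Fin k) // M.Nonempty}

/-- The transition relation of the composed transition system `TS^k_𝒜`. -/
def CompTrans {S L : Type*} (T : LTS S L) {k : ℕ}
    (Arb : (Fin k → S) → Set (Sched k)) (sb sb' : Fin k → S) : Prop :=
  ∃ M ∈ Arb sb, ∃ ℓ, ComposedStep T M.val ℓ sb sb'

/-- `s̄` is ψ-reachable in the composed transition system `TS^k_𝒜`. -/
def PsiReachable {S L : Type*} (T : LTS S L) {k : ℕ} (ψ : (Fin k → S) → Prop)
    (Arb : (Fin k → S) → Set (Sched k)) (sb : Fin k → S) : Prop :=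
  ∃ sb0, (∀ i, sb0 i ∈ T.Init) ∧ ψ sb0 ∧ Relation.ReflTransGen (CompTrans T Arb) sb0 sb

/-- The arbiter `𝒜` is valid for `TS` and `φ̂`. -/
def ValidArbiter {S L : Type*} (T : LTS S L) {k : ℕ} (ψ : (Fin k → S) → Prop)
    (ξ : Fin k → S → Prop) (Arb : (Fin k → S) → Set (Sched k)) : Prop :=
  ∀ sb, PsiReachable T ψ Arb sb →
    (Arb sb).Nonempty ∧ ∀ M ∈ Arb sb, ValidSched ξ M.val sb

open Finset

theorem Nat.count_congr_of_lt {p q : ℕ → Prop} [DecidablePred p] [DecidablePred q] {n : ℕ}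
    (h : ∀ m < n, (p m ↔ q m)) : Nat.count p n = Nat.count q n :=
  le_antisymm (Nat.count_mono_left fun m hm => (h m hm).mp)
    (Nat.count_mono_left fun m hm => (h m hm).mpr)

theorem Finset.sum_sub_add_indicator_lt {ι : Type*} [Fintype ι] {q r : ι → ℕ} {M : Set ι}
    (hM : M.Nonempty) (hlt : ∀ i ∈ M, q i < r i) :
    ∑ i, (r i - (q i + M.indicator 1 i)) < ∑ i, (r i - q i) := by
  obtain ⟨i₀, hi₀⟩ := hM
  refine sum_lt_sum (fun i _ => ?_) ⟨i₀, mem_univ _, ?_⟩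
  · exact Nat.sub_le_sub_left (Nat.le_add_right _ _) _
  · simpa [hi₀] using Nat.sub_succ_lt_self _ _ (hlt i₀ hi₀)

theorem Pi.add_indicator_one_le {ι : Type*} {q r : ι → ℕ} {M : Set ι} (hqr : q ≤ r)
    (hlt : ∀ i ∈ M, q i < r i) : q + M.indicator 1 ≤ r := fun i => by
  by_cases hi : i ∈ M
  · simpa [hi] using hlt i hi
  · simpa [hi] using hqr i

theorem Nat.lt_card_of_strictMono {p : ℕ → Prop} {j : ℕ} {f : Fin (j + 1) → ℕ} (hf : StrictMono f)
    (hp : ∀ r, p (f r)) (hfin : (Set.ofPred p).Finite) : j < #hfin.toFinset := by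
  simpa using card_le_card_of_injOn (s := univ) f
    (fun r _ => hfin.mem_toFinset.2 (hp r)) hf.injective.injOn

section

variable {S L : Type*}

theorem hasObsUpTo_iff_exists_count (ξ : S → Prop) [DecidablePred ξ] (t : ℕ → S) (j : ℕ) :
    HasObsUpTo ξ t j ↔ ∃ m, ξ (t m) ∧ Nat.count (fun n => ξ (t n)) m = j := by
  constructor
  · rintro ⟨f, hf, hξ⟩
    have hcard := Nat.lt_card_of_strictMono (p := fun n => ξ (t n)) hf hξ
    exact ⟨_, Nat.nth_mem j hcard, Nat.count_nth hcard⟩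
  · rintro ⟨m, hm, rfl⟩
    have hcard (r : Fin (Nat.count (fun n => ξ (t n)) m + 1)) :
        ∀ hfin : (Set.ofPred fun n => ξ (t n)).Finite, (r : ℕ) < #hfin.toFinset :=
      fun hfin => (Nat.le_of_lt_succ r.is_lt).trans_lt (Nat.count_lt_card hfin hm)
    exact ⟨fun r => Nat.nth _ r, fun r r' hr => Nat.nth_lt_nth' hr (hcard r'),
      fun r => Nat.nth_mem _ (hcard r)⟩

theorem obsState_eq_of_count {ξ : S → Prop} [DecidablePred ξ] {t : ℕ → S} {m j : ℕ}
    (hm : ξ (t m)) (hc : Nat.count (fun n => ξ (t n)) m = j) : obsState ξ t j = t m := by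
  rw [obsState, ← hc, Nat.nth_count hm]

namespace LTS

variable (T : LTS S L)

theorem exists_isTrace (s : S) : ∃ t, T.IsTrace t s := by
  choose ℓ next hnext using T.total
  refine ⟨fun n => next^[n] s, rfl, fun n => ⟨ℓ (next^[n] s), ?_⟩⟩
  simpa only [Function.iterate_succ_apply'] using hnext _

variable {T}

theorem IsTrace.exists_reroute {t : ℕ → S} {s s' : S} {ℓ : L} (ht : T.IsTrace t s) (m : ℕ)
    (h : T.Tr (t m) ℓ s') : ∃ t', T.IsTrace t' s ∧ (∀ n ≤ m, t' n = t n) ∧ t' (m + 1) = s' := by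
  obtain ⟨u, hu0, hu⟩ := T.exists_isTrace s'
  refine ⟨fun n => if n ≤ m then t n else u (n - (m + 1)), ⟨by simp [ht.1], fun n => ?_⟩,
    fun n hn => if_pos hn, by simp [hu0]⟩
  rcases lt_trichotomy n m with hn | rfl | hn
  · simpa [hn.le, Nat.succ_le_of_lt hn] using ht.2 n
  · exact ⟨ℓ, by simpa [hu0] using h⟩
  · have : n + 1 - (m + 1) = n - (m + 1) + 1 := by omega
    simpa [not_le.2 hn, not_le.2 (hn.trans (Nat.lt_succ_self n)), this] using hu (n - (m + 1))

end LTS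

variable {T : LTS S L} {k : ℕ} {ψ : (Fin k → S) → Prop} {ξ : Fin k → S → Prop}
  {Arb : (Fin k → S) → Set (Sched k)}

theorem exists_aligned_traces_of_reflTransGen [∀ i, DecidablePred (ξ i)]
    (hArb : ValidArbiter T ψ ξ Arb) {sb0 sb : Fin k → S} (hinit : ∀ i, sb0 i ∈ T.Init)
    (hψ : ψ sb0) (h : Relation.ReflTransGen (CompTrans T Arb) sb0 sb) :
    ∃ (t : Fin k → ℕ → S) (m : Fin k → ℕ) (c : ℕ), (∀ i, T.IsTrace (t i) (sb0 i)) ∧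
      (∀ i, t i (m i) = sb i) ∧ ∀ i, Nat.count (fun n => ξ i (t i n)) (m i) = c := by
  induction h with
  | refl =>
    choose t ht using fun i => T.exists_isTrace (sb0 i)
    exact ⟨t, 0, 0, ht, fun i => (ht i).1, fun i => Nat.count_zero _⟩
  | @tail sb sb' hpath hstep ih =>
    obtain ⟨M, hM, ℓ, hmove, hstay⟩ := hstep
    obtain ⟨t, m, c, ht, htm, hcount⟩ := ih
    have hmoved : ∀ i ∈ M.val, ∃ t', T.IsTrace t' (sb0 i) ∧ t' (m i + 1) = sb' i ∧
        Nat.count (fun n => ξ i (t' n)) (m i + 1) = c + if ξ i (sb i) then 1 else 0 := by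
      intro i hi
      obtain ⟨t', ht', hagree, hlast⟩ :=
        (ht i).exists_reroute (m i) ((htm i).symm ▸ hmove i hi)
      refine ⟨t', ht', hlast, ?_⟩
      rw [Nat.count_succ, hagree _ le_rfl, htm i, ← hcount i,
        Nat.count_congr_of_lt fun n hn => by rw [hagree n hn.le]]
    obtain ⟨c', hc'M, hc'⟩ : ∃ c', (∀ i ∈ M.val, (c + if ξ i (sb i) then 1 else 0) = c') ∧
        ∀ i ∉ M.val, c = c' := by
      rcases (hArb sb ⟨sb0, hinit, hψ, hpath⟩).2 M hM with hidle | ⟨hMuniv, hobs⟩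
      · exact ⟨c, fun i hi => by simp [hidle i hi], fun _ _ => rfl⟩
      · exact ⟨c + 1, fun i _ => by simp [hobs i], fun i hi => absurd (hMuniv ▸ Set.mem_univ i) hi⟩
    have hnext : ∀ i, ∃ t' m', T.IsTrace t' (sb0 i) ∧ t' m' = sb' i ∧
        Nat.count (fun n => ξ i (t' n)) m' = c' := by
      intro i
      by_cases hi : i ∈ M.val
      · obtain ⟨t', ht', hlast, hcnt⟩ := hmoved i hi
        exact ⟨t', m i + 1, ht', hlast, hcnt.trans (hc'M i hi)⟩
      · exact ⟨t i, m i, ht i, (htm i).trans (hstay i hi).symm, (hcount i).trans (hc' i hi)⟩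
    choose t' m' ht' hlast hcnt using hnext
    exact ⟨t', m', c', ht', hlast, hcnt⟩

theorem PsiReachable.advance {t : Fin k → ℕ → S}
    (hstep : ∀ i n, ∃ ℓ, T.Tr (t i n) ℓ (t i (n + 1))) {q : Fin k → ℕ}
    (hq : PsiReachable T ψ Arb fun i => t i (q i)) {M : Sched k}
    (hM : M ∈ Arb fun i => t i (q i)) :
    PsiReachable T ψ Arb fun i => t i (q i + M.val.indicator 1 i) := by
  obtain ⟨sb0, hinit, hψ, hpath⟩ := hq
  choose ℓ hℓ using hstep
  refine ⟨sb0, hinit, hψ, hpath.tail ⟨M, hM, fun i => ℓ i (q i), fun i hi => ?_, fun i hi => ?_⟩⟩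
  · simpa [hi] using hℓ i (q i)
  · simp [hi]

theorem PsiReachable.of_aligned [∀ i, DecidablePred (ξ i)] (hArb : ValidArbiter T ψ ξ Arb)
    {t : Fin k → ℕ → S} (hstep : ∀ i n, ∃ ℓ, T.Tr (t i n) ℓ (t i (n + 1))) {r : Fin k → ℕ}
    {j : ℕ} (hr : ∀ i, ξ i (t i (r i))) (hrj : ∀ i, Nat.count (fun n => ξ i (t i n)) (r i) = j)
    {q : Fin k → ℕ} {c : ℕ} (hqr : q ≤ r) (hqc : ∀ i, Nat.count (fun n => ξ i (t i n)) (q i) = c)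
    (hq : PsiReachable T ψ Arb fun i => t i (q i)) :
    PsiReachable T ψ Arb fun i => t i (r i) := by
  induction hd : ∑ i, (r i - q i) using Nat.strong_induction_on generalizing q c with
  | _ d ih =>
  rcases hqr.eq_or_lt with rfl | hlt
  · exact hq
  obtain ⟨i₀, hi₀⟩ := (Pi.lt_def.1 hlt).2
  obtain ⟨M, hM⟩ := (hArb _ hq).1
  obtain ⟨c', hMlt, hc'⟩ : ∃ c', (∀ i ∈ M.val, q i < r i) ∧
      ∀ i, Nat.count (fun n => ξ i (t i n)) (q i + M.val.indicator 1 i) = c' := by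
    rcases (hArb _ hq).2 M hM with hidle | ⟨hMuniv, hobs⟩
    · refine ⟨c, fun i hi => (hqr i).lt_of_ne fun h => hidle i hi ?_, fun i => ?_⟩
      · exact show ξ i (t i (q i)) from h ▸ hr i
      · by_cases hi : i ∈ M.val
        · simp [hi, Nat.count_succ, hidle i hi, hqc i]
        · simp [hi, hqc i]
    · -- component `i₀` is at an observation point strictly before its `j`-th one, so `c < j`,
      -- and then every component is strictly before its `j`-th observation point
      have hcj : c < j := hqc i₀ ▸ hrj i₀ ▸ Nat.count_strict_mono (hobs i₀) hi₀
      refine ⟨c + 1, fun i _ => Nat.lt_of_count_lt_count (p := fun n => ξ i (t i n))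
        (by rw [hqc i, hrj i]; exact hcj), fun i => ?_⟩
      simp [hMuniv, Nat.count_succ, hobs i, hqc i]
  exact ih _ (hd ▸ Finset.sum_sub_add_indicator_lt M.prop hMlt)
    (Pi.add_indicator_one_le hqr hMlt) hc' (hq.advance hstep hM) rfl

end

theorem kSafety_iff_composed_safe_general {S L : Type*} (T : LTS S L) {k : ℕ}
    (ψ : (Fin k → S) → Prop) (ξ : Fin k → S → Prop) (φ : (Fin k → S) → Prop)
    (Arb : (Fin k → S) → Set (Sched k)) (hArb : ValidArbiter T ψ ξ Arb) :
    kSafetyModels T ψ ξ φ ↔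
      ∀ sb, PsiReachable T ψ Arb sb → ¬ BadState ξ φ sb := by
  classical
  constructor
  · rintro hmodel sb ⟨sb0, hinit, hψ, hpath⟩ ⟨hobs, hφ⟩
    obtain ⟨t, m, c, ht, htm, hcount⟩ := exists_aligned_traces_of_reflTransGen hArb hinit hψ hpath
    have hobs' : ∀ i, ξ i (t i (m i)) := fun i => (htm i).symm ▸ hobs i
    have hsb : (fun i => obsState (ξ i) (t i) c) = sb :=
      funext fun i => (obsState_eq_of_count (hobs' i) (hcount i)).trans (htm i)
    exact hφ (hsb ▸ hmodel sb0 hinit hψ t ht c fun i =>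
      (hasObsUpTo_iff_exists_count _ _ _).2 ⟨m i, hobs' i, hcount i⟩)
  · intro hsafe sb0 hinit hψ t ht j hobs
    choose r hr hrj using fun i => (hasObsUpTo_iff_exists_count _ _ _).1 (hobs i)
    have hstart : PsiReachable T ψ Arb fun i => t i ((0 : Fin k → ℕ) i) :=
      ⟨sb0, hinit, hψ, by simp only [Pi.zero_apply, (ht _).1]; rfl⟩
    have hreach := PsiReachable.of_aligned hArb (fun i => (ht i).2) hr hrj
      (fun i => Nat.zero_le (r i)) (fun i => Nat.count_zero _) hstart
    have hr' : (fun i => obsState (ξ i) (t i) j) = fun i => t i (r i) :=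
      funext fun i => obsState_eq_of_count (hr i) (hrj i)
    exact hr' ▸ not_not.1 fun hφ => hsafe _ hreach ⟨hr, hφ⟩

theorem kSafety_iff_composed_safe {S L : Type*} (T : LTS S L) {k : ℕ} (hk : 1 ≤ k)
    (ψ : (Fin k → S) → Prop) (ξ : Fin k → S → Prop) (φ : (Fin k → S) → Prop)
    (Arb : (Fin k → S) → Set (Sched k)) (hArb : ValidArbiter T ψ ξ Arb) :
    kSafetyModels T ψ ξ φ ↔
      ∀ sb, PsiReachable T ψ Arb sb → ¬ BadState ξ φ sb :=
  kSafety_iff_composed_safe_general T ψ ξ φ Arb hArb
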